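/- arXiv:2105.00950 — 3 statements merged into one kernel-verified Lean document; each statement's English description precedes it below -/
import Mathlib

section
/- In a finite game where each player m's reward is R_m(a) = r_m(a) + Σ_{i ∈ N_m} r_i(a), with r_i depending only on the actions of player i and its neighbors N_i, and the neighbor relation symmetric (i ∈ N_m ↔ m ∈ N_i), the function φ(a) = Σ_{m} r_m(a) is an exact potential: for every player m and actions a_m, a'_m with the others fixed, R_m(a'_m, a_{−m}) − R_m(a_m, a_{−m}) = φ(a'_m, a_{−m}) − φ(a_m, a_{−m}). -/
open Finset

/-- In a game on a graph where each player `m`'s reward is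
`R m a = r m a + ∑ i ∈ N m, r i a`, with each local reward `r i` depending only
on the actions of player `i` and its neighbors, and a symmetric neighbor
relation, the function `φ a = ∑ m, r m a` is an exact potential. -/
theorem sum_local_rewards_is_exact_potential
    {V : Type*} [Fintype V] [DecidableEq V]
    (A : V → Type*) (Nbr : V → Finset V)
    (hsymm : ∀ m i, i ∈ Nbr m ↔ m ∈ Nbr i)
    (hirrefl : ∀ m, m ∉ Nbr m)
    (r : V → (∀ m, A m) → ℝ)
    (hlocal : ∀ i (a a' : ∀ m, A m),
      (∀ j ∈ insert i (Nbr i), a j = a' j) → r i a = r i a')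
    (R : V → (∀ m, A m) → ℝ)
    (hR : ∀ m a, R m a = r m a + ∑ i ∈ Nbr m, r i a)
    (φ : (∀ m, A m) → ℝ)
    (hφ : ∀ a, φ a = ∑ m, r m a) :
    ∀ (m : V) (a : ∀ m, A m) (a'm : A m),
      R m (Function.update a m a'm) - R m a =
        φ (Function.update a m a'm) - φ a := by
  intro m a a'm
  have key : ∀ i : V, i ∉ insert m (Nbr m) →
      r i (Function.update a m a'm) = r i a := by
    intro i hi
    apply hlocal
    intro j hj
    apply Function.update_of_ne
    rintro rfl
    simp only [mem_insert] at hi hj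
    rcases hj with h | h
    · exact hi (Or.inl h.symm)
    · exact hi (Or.inr ((hsymm _ i).mpr h))
  have hsum : ∑ i : V, (r i (Function.update a m a'm) - r i a)
      = ∑ i ∈ insert m (Nbr m), (r i (Function.update a m a'm) - r i a) :=
    (Finset.sum_subset (subset_univ _)
      (fun i _ hi => sub_eq_zero.mpr (key i hi))).symm
  rw [hφ, hφ, hR, hR, ← Finset.sum_sub_distrib, hsum,
    Finset.sum_insert (hirrefl m), Finset.sum_sub_distrib]
  ring
end

section
/- In a finite exact potential game, any sequence of single-player strict best-reply improvements strictly increases the potential at each step and therefore terminates at a pure Nash equilibrium in finitely many steps (the finite improvement property). -/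
/-- Finite improvement property of finite exact potential games: every
single-player strict improvement step strictly increases the potential; there
is no infinite sequence of improvement steps; and any profile admitting no
improvement step is a pure Nash equilibrium. -/
theorem finite_improvement_property
    {V : Type*} [Fintype V] [DecidableEq V]
    (A : V → Type*) [∀ m, Fintype (A m)]
    (R : V → (∀ m, A m) → ℝ) (φ : (∀ m, A m) → ℝ)
    (hpot : ∀ (m : V) (a : ∀ m, A m) (a'm : A m),
      R m (Function.update a m a'm) - R m a =
        φ (Function.update a m a'm) - φ a) :
    (∀ (a : ∀ m, A m) (m : V) (a'm : A m),
        R m a < R m (Function.update a m a'm) →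
        φ a < φ (Function.update a m a'm)) ∧
    (¬ ∃ s : ℕ → ∀ m, A m, ∀ t, ∃ (m : V) (a'm : A m),
        s (t + 1) = Function.update (s t) m a'm ∧
        R m (s t) < R m (s (t + 1))) ∧
    (∀ a : ∀ m, A m,
        (¬ ∃ (m : V) (a'm : A m), R m a < R m (Function.update a m a'm)) →
        ∀ (m : V) (am : A m), R m (Function.update a m am) ≤ R m a) := by
  have h1 : ∀ (a : ∀ m, A m) (m : V) (a'm : A m),
      R m a < R m (Function.update a m a'm) →
      φ a < φ (Function.update a m a'm) := by
    intro a m a'm h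
    have := hpot m a a'm
    linarith
  refine ⟨h1, ?_, ?_⟩
  · rintro ⟨s, hs⟩
    have hmono : StrictMono (fun t => φ (s t)) := by
      apply strictMono_nat_of_lt_succ
      intro t
      obtain ⟨m, a'm, heq, hlt⟩ := hs t
      have := h1 (s t) m a'm (heq ▸ hlt)
      rwa [heq]
    have hinj : Function.Injective s := by
      intro x y hxy
      by_contra hne
      rcases lt_or_gt_of_ne hne with h | h
      · exact absurd (congrArg φ hxy) (ne_of_lt (hmono h))
      · exact absurd (congrArg φ hxy) (ne_of_gt (hmono h))
    exact _root_.not_injective_infinite_finite s hinj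
  · intro a hno m am
    push_neg at hno
    exact hno m am
end

section
/- Let f(p) = p·log2(1 + ρ·K/p²) for p > 0 with ρ, K > 0 fixed. Then f is strictly increasing in p on the region where ρK/p² is sufficiently large; in particular, for any integer N ≥ 2, if ρK ≥ N² · (2^{2N} − 1) then f(N) > f(q) for all integers 1 ≤ q < N. -/
/-!
Write `s = ρK` and `f(p) = p log(1 + s/p²)`. Then
`f'(p) = log(1 + s/p²) - 2s/(p² + s)`, and the subtracted term is always below `2`,
so `f` increases on every interval `(0, b]` on which `1 + s/p² ≥ e²`; since `s/p²`
decreases in `p`, it suffices that `1 + s/b² ≥ e²`. The SNR hypothesis gives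
`1 + s/N² ≥ 2^(2N) ≥ 16 > e²`, so `f q < f N` for `0 < q < N`, and dividing by
`log 2` turns `log` into `log₂`.
-/

open Real Set

noncomputable def capacityOfRank (s p : ℝ) : ℝ := p * log (1 + s / p ^ 2)

lemma hasDerivAt_capacityOfRank {s p : ℝ} (hp : p ≠ 0) (hps : p ^ 2 + s ≠ 0) :
    HasDerivAt (capacityOfRank s) (log (1 + s / p ^ 2) - 2 * s / (p ^ 2 + s)) p := by
  have hp2 : p ^ 2 ≠ 0 := pow_ne_zero 2 hp
  have hlog_arg : 1 + s / p ^ 2 ≠ 0 := by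
    rw [one_add_div hp2]
    exact div_ne_zero hps hp2
  refine ((hasDerivAt_id p).mul (((hasDerivAt_const p 1).add
    ((hasDerivAt_const p s).div (hasDerivAt_pow 2 p) hp2)).log hlog_arg)).congr_deriv ?_
  simp only [Pi.add_apply, Pi.div_apply, id]
  field_simp
  ring

theorem strictMonoOn_capacityOfRank {s b : ℝ} (hb : exp 2 ≤ 1 + s / b ^ 2) :
    StrictMonoOn (capacityOfRank s) (Ioc 0 b) := by
  have hs : 0 < s := by
    have hpos : 0 < s / b ^ 2 := by linarith [add_one_le_exp (2 : ℝ)]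
    rcases div_pos_iff.1 hpos with h | h
    · exact h.1
    · exact absurd h.2 (sq_nonneg b).not_gt
  have hderiv : ∀ p ∈ Ioc (0 : ℝ) b, HasDerivAt (capacityOfRank s)
      (log (1 + s / p ^ 2) - 2 * s / (p ^ 2 + s)) p :=
    fun p hp => hasDerivAt_capacityOfRank hp.1.ne' (by nlinarith [hp.1])
  refine strictMonoOn_of_deriv_pos (convex_Ioc 0 b)
    (fun p hp => (hderiv p hp).continuousAt.continuousWithinAt) fun p hp => ?_
  rw [interior_Ioc] at hp
  obtain ⟨hp0, hpb⟩ := hp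
  rw [(hderiv p ⟨hp0, hpb.le⟩).deriv]
  have hhigh : 2 ≤ log (1 + s / p ^ 2) := by
    rw [le_log_iff_exp_le (by positivity)]
    refine hb.trans ?_
    gcongr
  have hsmall : 2 * s / (p ^ 2 + s) < 2 := by
    rw [div_lt_iff₀ (by positivity)]
    nlinarith
  linarith

theorem full_rank_optimal_high_snr_general (ρ K : ℝ)
    (N : ℕ)
    (hsnr : (N : ℝ) ^ 2 * (2 ^ (2 * N) - 1) ≤ ρ * K) :
    ∀ q : ℕ, 1 ≤ q → q < N →
      (q : ℝ) * Real.logb 2 (1 + ρ * K / (q : ℝ) ^ 2) <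
        (N : ℝ) * Real.logb 2 (1 + ρ * K / (N : ℝ) ^ 2) := by
  intro q hq hqN
  have hN : (0 : ℝ) < N := Nat.cast_pos.2 (by omega)
  have hexp : exp 2 ≤ 2 ^ (2 * N) :=
    calc exp 2 = exp 1 ^ 2 := by rw [exp_one_pow]; norm_num
      _ ≤ 3 ^ 2 := by gcongr; exact exp_one_lt_three.le
      _ ≤ 2 ^ 4 := by norm_num
      _ ≤ 2 ^ (2 * N) := pow_le_pow_right₀ one_le_two (by omega)
  have hpow : (2 : ℝ) ^ (2 * N) - 1 ≤ ρ * K / N ^ 2 := by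
    rw [le_div_iff₀ (by positivity), mul_comm]
    exact hsnr
  have hlt : capacityOfRank (ρ * K) q < capacityOfRank (ρ * K) N :=
    strictMonoOn_capacityOfRank (by linarith) ⟨by positivity, by exact_mod_cast hqN.le⟩
      ⟨hN, le_rfl⟩ (by exact_mod_cast hqN)
  simp only [logb, ← mul_div_assoc]
  exact div_lt_div_of_pos_right hlt (log_pos one_lt_two)

/-- For `f p = p · log2 (1 + ρK/p²)`: at high SNR full rank is optimal. For any
integer `N ≥ 2`, if `ρK ≥ N²(2^(2N) − 1)` then `f N > f q` for every integer
`1 ≤ q < N`. -/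
theorem full_rank_optimal_high_snr (ρ K : ℝ) (hρ : 0 < ρ) (hK : 0 < K)
    (N : ℕ) (hN : 2 ≤ N)
    (hsnr : (N : ℝ) ^ 2 * (2 ^ (2 * N) - 1) ≤ ρ * K) :
    ∀ q : ℕ, 1 ≤ q → q < N →
      (q : ℝ) * Real.logb 2 (1 + ρ * K / (q : ℝ) ^ 2) <
        (N : ℝ) * Real.logb 2 (1 + ρ * K / (N : ℝ) ^ 2) :=
  full_rank_optimal_high_snr_general ρ K N hsnr
end
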